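/- Let A ⊆ 2^ω × 2^ω. If player I has a winning strategy in the two-dimensional measure game G_2(0, A), then player I has a winning strategy in the measure game G(0, B), where B = {x ∈ 2^ω : player I does not have a winning strategy in G(0, A_x)} and A_x = {y ∈ 2^ω : (x,y) ∈ A}. -/

import Mathlib

open MeasureTheory

namespace MeasureGame

/-- Cantor space `2^ω`. -/
abbrev Cantor : Type := ℕ → Bool

/-- The basic cylinder set `N_t` determined by a finite binary string `t`. -/
def cyl (t : List Bool) : Set Cantor := {x | ∀ i : Fin t.length, x i.1 = t.get i}

/-- A round of the measure game: player I's pair of rationals, then player II's bit. -/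
abbrev GRound : Type := (ℚ × ℚ) × Bool

/-- A strategy for player I in the measure game. -/
abbrev StratI : Type := List GRound → ℚ × ℚ

/-- A strategy for player II in the measure game. -/
abbrev StratII : Type := List GRound → ℚ × ℚ → Bool

/-- A run of the measure game. -/
abbrev Run : Type := ℕ → GRound

/-- The history (list of completed rounds) before round `n`. -/
def hist (r : Run) (n : ℕ) : List GRound := (List.range n).map r

/-- Player II's bit at round `n`. -/
def bits (r : Run) (n : ℕ) : Bool := (r n).2

/-- The finite binary string of player II's first `n` bits. -/
def path (r : Run) (n : ℕ) : List Bool := (List.range n).map (bits r)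

/-- The value player I assigned at round `n` to the one-bit extension of the current path by `b`. -/
def valI (r : Run) (n : ℕ) (b : Bool) : ℚ := if b then (r n).1.2 else (r n).1.1

/-- The value selected by player II's move at round `n`. -/
def sel (r : Run) (n : ℕ) : ℚ := valI r n (bits r n)

/-- Legality requirements on the single value player I assigned to `path r n ++ [b]`:
it is nonnegative, at most `μ(N_{t⌢b})`, and strictly below it when the latter is positive. -/
def mOK (μ : Measure Cantor) (r : Run) (n : ℕ) (b : Bool) : Prop :=
  0 ≤ valI r n b ∧ ((valI r n b : ℝ) ≤ (μ (cyl (path r n ++ [b]))).toReal) ∧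
    (0 < (μ (cyl (path r n ++ [b]))).toReal → (valI r n b : ℝ) < (μ (cyl (path r n ++ [b]))).toReal)

/-- Player I's move at round `n` of a run is legal (for the game `G(s, ·)`). -/
def IOK (μ : Measure Cantor) (s : ℝ) (r : Run) : ℕ → Prop
  | 0 => mOK μ r 0 false ∧ mOK μ r 0 true ∧ s < ((r 0).1.1 : ℝ) + ((r 0).1.2 : ℝ)
  | (n + 1) => mOK μ r (n + 1) false ∧ mOK μ r (n + 1) true ∧
      (r (n + 1)).1.1 + (r (n + 1)).1.2 = sel r n

/-- Player II's move at round `n` of a run is legal: the selected value is nonzero. -/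
def IIOK (r : Run) (n : ℕ) : Prop := sel r n ≠ 0

/-- The run `r` is consistent with player I's strategy `σ`. -/
def ConsI (σ : StratI) (r : Run) : Prop := ∀ n, (r n).1 = σ (hist r n)

/-- The run `r` is consistent with player II's strategy `τ`. -/
def ConsII (τ : StratII) (r : Run) : Prop := ∀ n, (r n).2 = τ (hist r n) (r n).1

/-- Player II wins the run `r` of `G(s, A)`: either player I is the first to break a rule,
or all rules are followed and the sequence of II's bits belongs to `A`. -/
def IIWinsRun (μ : Measure Cantor) (s : ℝ) (A : Set Cantor) (r : Run) : Prop :=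
  (∃ n, (∀ m < n, IOK μ s r m ∧ IIOK r m) ∧ ¬ IOK μ s r n) ∨
    ((∀ n, IOK μ s r n ∧ IIOK r n) ∧ bits r ∈ A)

/-- Player I has a winning strategy in the measure game `G(s, A)`. -/
def WinsI (μ : Measure Cantor) (s : ℝ) (A : Set Cantor) : Prop :=
  ∃ σ : StratI, ∀ r : Run, ConsI σ r → ¬ IIWinsRun μ s A r

/-- Player II has a winning strategy in the measure game `G(s, A)`. -/
def WinsII (μ : Measure Cantor) (s : ℝ) (A : Set Cantor) : Prop :=
  ∃ τ : StratII, ∀ r : Run, ConsII τ r → IIWinsRun μ s A r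

/-- The outer measure `μ*(A) = inf {μ(U) : U open, A ⊆ U}`. -/
noncomputable def outerM (μ : Measure Cantor) (A : Set Cantor) : ℝ :=
  sInf {v : ℝ | ∃ U : Set Cantor, IsOpen U ∧ A ⊆ U ∧ v = (μ U).toReal}

/-- The inner measure `μ_*(A) = sup {μ(F) : F closed, F ⊆ A}`. -/
noncomputable def innerM (μ : Measure Cantor) (A : Set Cantor) : ℝ :=
  sSup {v : ℝ | ∃ F : Set Cantor, IsClosed F ∧ F ⊆ A ∧ v = (μ F).toReal}

/-! The two-dimensional measure game `G₂(s, A)` for `A ⊆ 2^ω × 2^ω`, played with respect to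
the product measure `μ × μ`. -/

/-- A round of the two-dimensional game: player I's quadruple of rationals (indexed by
`Bool × Bool`), then player II's pair of bits. -/
abbrev GRound2 : Type := ((Bool × Bool) → ℚ) × (Bool × Bool)

/-- A strategy for player I in the two-dimensional game. -/
abbrev StratI2 : Type := List GRound2 → ((Bool × Bool) → ℚ)

/-- A strategy for player II in the two-dimensional game. -/
abbrev StratII2 : Type := List GRound2 → ((Bool × Bool) → ℚ) → Bool × Bool

/-- A run of the two-dimensional game. -/
abbrev Run2 : Type := ℕ → GRound2

def hist2 (r : Run2) (n : ℕ) : List GRound2 := (List.range n).map r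

def bits2 (r : Run2) (n : ℕ) : Bool × Bool := (r n).2

def path2 (r : Run2) (n : ℕ) : List (Bool × Bool) := (List.range n).map (bits2 r)

/-- The rectangle `N_{u₀} × N_{u₁}` determined by `u ∈ (2 × 2)^{<ω}`. -/
def rect (u : List (Bool × Bool)) : Set (Cantor × Cantor) :=
  cyl (u.map Prod.fst) ×ˢ cyl (u.map Prod.snd)

def valI2 (r : Run2) (n : ℕ) (b : Bool × Bool) : ℚ := (r n).1 b

/-- The value selected by player II's move at round `n`. -/
def sel2 (r : Run2) (n : ℕ) : ℚ := valI2 r n (bits2 r n)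

def mOK2 (μ : Measure Cantor) (r : Run2) (n : ℕ) (b : Bool × Bool) : Prop :=
  0 ≤ valI2 r n b ∧
    ((valI2 r n b : ℝ) ≤ ((μ.prod μ) (rect (path2 r n ++ [b]))).toReal) ∧
    (0 < ((μ.prod μ) (rect (path2 r n ++ [b]))).toReal →
      (valI2 r n b : ℝ) < ((μ.prod μ) (rect (path2 r n ++ [b]))).toReal)

def IOK2 (μ : Measure Cantor) (s : ℝ) (r : Run2) : ℕ → Prop
  | 0 => (∀ b : Bool × Bool, mOK2 μ r 0 b) ∧ s < ∑ b : Bool × Bool, ((r 0).1 b : ℝ)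
  | (n + 1) => (∀ b : Bool × Bool, mOK2 μ r (n + 1) b) ∧
      (∑ b : Bool × Bool, (r (n + 1)).1 b) = sel2 r n

def IIOK2 (r : Run2) (n : ℕ) : Prop := sel2 r n ≠ 0

def ConsI2 (σ : StratI2) (r : Run2) : Prop := ∀ n, (r n).1 = σ (hist2 r n)

def ConsII2 (τ : StratII2) (r : Run2) : Prop := ∀ n, (r n).2 = τ (hist2 r n) (r n).1

/-- Player II wins the run `r` of `G₂(s, A)`: either player I is the first to break a rule,
or all rules are followed and the pair of coordinate sequences of II's moves lies in `A`. -/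
def IIWinsRun2 (μ : Measure Cantor) (s : ℝ) (A : Set (Cantor × Cantor)) (r : Run2) : Prop :=
  (∃ n, (∀ m < n, IOK2 μ s r m ∧ IIOK2 r m) ∧ ¬ IOK2 μ s r n) ∨
    ((∀ n, IOK2 μ s r n ∧ IIOK2 r n) ∧
      ((fun n => (bits2 r n).1, fun n => (bits2 r n).2) : Cantor × Cantor) ∈ A)

/-- Player I has a winning strategy in the two-dimensional game `G₂(s, A)`. -/
def WinsI2 (μ : Measure Cantor) (s : ℝ) (A : Set (Cantor × Cantor)) : Prop :=
  ∃ σ : StratI2, ∀ r : Run2, ConsI2 σ r → ¬ IIWinsRun2 μ s A r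

/-- Player II has a winning strategy in the two-dimensional game `G₂(s, A)`. -/
def WinsII2 (μ : Measure Cantor) (s : ℝ) (A : Set (Cantor × Cantor)) : Prop :=
  ∃ τ : StratII2, ∀ r : Run2, ConsII2 τ r → IIWinsRun2 μ s A r

/-!
Let `σ` win `G₂(0, A)` for player I. Along the positions reached by legal moves of player II, the
values of `σ` form an additive mass on rectangles, of positive total and dominated by `μ × μ`;
so the set `F` of pairs along which this mass stays positive is closed, has positive measure
(the mass bound passes to the decreasing intersection), and avoids `A`, since along such a pair II
never breaks a rule. By Fubini, the `x` with `μ(F_x) > 0` have positive measure and contain a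
compact `K` with `μ(K) > 0`.

Conversely, a closed set `F` of positive measure disjoint from `C` lets player I win `G(0, C)`:
they keep every value strictly below `μ(N_t ∩ F)`, so every cylinder along II's sequence meets
`F`, and the sequence lies in `F`. Applied to the sections `F_x`, `x ∈ K`, this shows that `K`
misses `B`; applied to `K`, it proves the theorem.
-/

lemma mem_cyl_iff {t : List Bool} {x : Cantor} :
    x ∈ cyl t ↔ (List.range t.length).map x = t := by
  simp [cyl, List.ext_getElem_iff, Fin.forall_iff]

lemma cyl_nil : cyl [] = Set.univ := by
  simp [Set.eq_univ_iff_forall, mem_cyl_iff]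

lemma mem_cyl_append {t : List Bool} {b : Bool} {x : Cantor} :
    x ∈ cyl (t ++ [b]) ↔ x ∈ cyl t ∧ x t.length = b := by
  simp only [mem_cyl_iff, List.length_append, List.length_singleton, List.range_succ,
    List.map_append, List.map_singleton]
  exact ⟨fun h => List.append_inj' h rfl |>.imp_right List.singleton_inj.1,
    fun ⟨h1, h2⟩ => by rw [h1, h2]⟩

lemma cyl_range_map (x : Cantor) (n : ℕ) :
    cyl ((List.range n).map x) = PiNat.cylinder x n := by
  ext y
  simp [mem_cyl_iff, List.map_inj_left]

lemma cyl_nonempty (t : List Bool) : (cyl t).Nonempty :=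
  ⟨fun i => t.getD i false, mem_cyl_iff.2 <| List.ext_getElem (by simp) fun i _ hi => by simp [hi]⟩

lemma isOpen_cyl (t : List Bool) : IsOpen (cyl t) := by
  obtain ⟨x, hx⟩ := cyl_nonempty t
  rw [← mem_cyl_iff.1 hx, cyl_range_map]
  exact PiNat.isOpen_cylinder _ x _

lemma measure_eq_sum_inter_preimage {α β : Type*} [MeasurableSpace α] [Fintype β]
    [MeasurableSpace β] [MeasurableSingletonClass β] (μ : Measure α) {g : α → β}
    (hg : Measurable g) (S : Set α) : μ S = ∑ b, μ (g ⁻¹' {b} ∩ S) := by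
  have := sum_measure_preimage_singleton (μ := μ.restrict S) Finset.univ
    fun b _ => hg (measurableSet_singleton b)
  simp only [Finset.coe_univ, Set.preimage_univ, Measure.restrict_apply_univ] at this
  rw [← this]
  exact Finset.sum_congr rfl fun b _ => Measure.restrict_apply (hg (measurableSet_singleton b))

lemma measure_cyl_inter_eq_add (μ : Measure Cantor) (t : List Bool) (F : Set Cantor) :
    μ (cyl t ∩ F) = μ (cyl (t ++ [false]) ∩ F) + μ (cyl (t ++ [true]) ∩ F) := by
  have hpiece : ∀ b, (fun x : Cantor => x t.length) ⁻¹' {b} ∩ (cyl t ∩ F) = cyl (t ++ [b]) ∩ F := by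
    intro b
    ext x
    simp only [Set.mem_inter_iff, Set.mem_preimage, Set.mem_singleton_iff, mem_cyl_append]
    tauto
  rw [measure_eq_sum_inter_preimage μ (measurable_pi_apply t.length), Fintype.sum_bool,
    hpiece, hpiece, add_comm]

/-- The invariant player I maintains on the value `q` of a node of mass `a`: a positive value
always leaves room below `a`, so that it can be split again. -/
def ZeroOrLt (q : ℚ) (a : ℝ) : Prop := q = 0 ∨ 0 < q ∧ (q : ℝ) < a

namespace ZeroOrLt

variable {q : ℚ} {a : ℝ}

lemma pos_of_ne_zero (h : ZeroOrLt q a) (hq : q ≠ 0) : 0 < a := by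
  obtain h | ⟨hpos, hlt⟩ := h
  · exact absurd h hq
  · exact (Rat.cast_pos.2 hpos).trans hlt

lemma legal {m : ℝ} (h : ZeroOrLt q a) (ham : a ≤ m) (hm : 0 ≤ m) :
    0 ≤ q ∧ (q : ℝ) ≤ m ∧ (0 < m → (q : ℝ) < m) := by
  obtain rfl | ⟨hpos, hlt⟩ := h
  · simpa using hm
  · exact ⟨hpos.le, (hlt.trans_le ham).le, fun _ => hlt.trans_le ham⟩

lemma exists_split {b : ℝ} (h : ZeroOrLt q (a + b)) :
    ∃ p : ℚ × ℚ, p.1 + p.2 = q ∧ ZeroOrLt p.1 a ∧ ZeroOrLt p.2 b := by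
  obtain rfl | ⟨hpos, hlt⟩ := h
  · exact ⟨(0, 0), by simp, Or.inl rfl, Or.inl rfl⟩
  rcases lt_or_ge (q : ℝ) b with hb | hb
  · exact ⟨(0, q), by simp, Or.inl rfl, Or.inr ⟨hpos, hb⟩⟩
  rcases lt_or_ge (q : ℝ) a with ha | ha
  · exact ⟨(q, 0), by simp, Or.inr ⟨hpos, ha⟩, Or.inl rfl⟩
  obtain ⟨r, hr₁, hr₂⟩ := exists_rat_btwn (show (q : ℝ) - b < a by linarith)
  have hr : (0 : ℝ) < r := by linarith
  have hrq : (r : ℝ) < q := by linarith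
  refine ⟨(r, q - r), by ring, Or.inr ⟨by exact_mod_cast hr, hr₂⟩,
    Or.inr ⟨by exact_mod_cast sub_pos.2 hrq, by push_cast; linarith⟩⟩

end ZeroOrLt

lemma exists_rat_gt_zeroOrLt {s a : ℝ} (h : s < a) : ∃ q : ℚ, s < q ∧ ZeroOrLt q a := by
  rcases lt_or_ge s 0 with hs | hs
  · exact ⟨0, by simpa using hs, Or.inl rfl⟩
  obtain ⟨q, hsq, hqa⟩ := exists_rat_btwn h
  exact ⟨q, hsq, Or.inr ⟨by exact_mod_cast hs.trans_lt hsq, hqa⟩⟩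

open Classical in
noncomputable def splitValue (a b : ℝ) (q : ℚ) : ℚ × ℚ :=
  if h : ZeroOrLt q (a + b) then h.exists_split.choose else (q, 0)

lemma splitValue_sum (a b : ℝ) (q : ℚ) : (splitValue a b q).1 + (splitValue a b q).2 = q := by
  unfold splitValue
  split_ifs with h
  exacts [h.exists_split.choose_spec.1, add_zero q]

lemma ZeroOrLt.splitValue {q : ℚ} {a b : ℝ} (h : ZeroOrLt q (a + b)) :
    ZeroOrLt (splitValue a b q).1 a ∧ ZeroOrLt (splitValue a b q).2 b := by
  rw [MeasureGame.splitValue, dif_pos h]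
  exact h.exists_split.choose_spec.2

def lastSel (q₀ : ℚ) (h : List GRound) : ℚ :=
  match h.getLast? with
  | none => q₀
  | some (m, b) => if b then m.2 else m.1

/-- Player I keeps the value selected by II below the mass `ν` of the current node. -/
noncomputable def massStrategy (ν : List Bool → ℝ) (q₀ : ℚ) : StratI := fun h =>
  splitValue (ν (h.map Prod.snd ++ [false])) (ν (h.map Prod.snd ++ [true])) (lastSel q₀ h)

lemma hist_succ (r : Run) (n : ℕ) : hist r (n + 1) = hist r n ++ [r n] := by
  simp [hist, List.range_succ]

lemma path_succ (r : Run) (n : ℕ) : path r (n + 1) = path r n ++ [bits r n] := by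
  simp [path, List.range_succ]

lemma lastSel_hist_succ (q₀ : ℚ) (r : Run) (n : ℕ) : lastSel q₀ (hist r (n + 1)) = sel r n := by
  rw [lastSel, hist_succ, List.getLast?_concat]
  rfl

lemma hist_map_snd (r : Run) (n : ℕ) : (hist r n).map Prod.snd = path r n := by
  simp [hist, path, bits, Function.comp_def]

section MassStrategy

variable {ν : List Bool → ℝ} {q₀ : ℚ} {r : Run} (hr : ConsI (massStrategy ν q₀) r)
include hr

lemma massStrategy_move (n : ℕ) :
    (r n).1 = splitValue (ν (path r n ++ [false])) (ν (path r n ++ [true]))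
      (lastSel q₀ (hist r n)) := by
  rw [hr n, massStrategy, hist_map_snd]

lemma massStrategy_sum (n : ℕ) : (r n).1.1 + (r n).1.2 = lastSel q₀ (hist r n) := by
  rw [massStrategy_move hr]
  exact splitValue_sum _ _ _

lemma zeroOrLt_valI_massStrategy (hadd : ∀ t, ν t = ν (t ++ [false]) + ν (t ++ [true]))
    (hq₀ : ZeroOrLt q₀ (ν [])) (n : ℕ) (b : Bool) :
    ZeroOrLt (valI r n b) (ν (path r n ++ [b])) := by
  have hsplit : ∀ n, ZeroOrLt (lastSel q₀ (hist r n)) (ν (path r n)) →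
      ∀ b, ZeroOrLt (valI r n b) (ν (path r n ++ [b])) := by
    intro n hn b
    rw [hadd] at hn
    cases b <;> simp [valI, massStrategy_move hr n, hn.splitValue]
  induction n generalizing b with
  | zero => exact hsplit 0 hq₀ b
  | succ n ih =>
    refine hsplit (n + 1) ?_ b
    rw [lastSel_hist_succ, path_succ]
    exact ih (bits r n)

end MassStrategy

theorem winsI_of_mass {μ : Measure Cantor} {s : ℝ} {C : Set Cantor} (ν : List Bool → ℝ)
    (hνμ : ∀ t, ν t ≤ (μ (cyl t)).toReal) (hadd : ∀ t, ν t = ν (t ++ [false]) + ν (t ++ [true]))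
    (hs : s < ν []) (hC : ∀ x, (∀ n, 0 < ν ((List.range (n + 1)).map x)) → x ∉ C) :
    WinsI μ s C := by
  obtain ⟨q₀, hsq₀, hq₀⟩ := exists_rat_gt_zeroOrLt hs
  refine ⟨massStrategy ν q₀, fun r hr => ?_⟩
  have hval := zeroOrLt_valI_massStrategy hr hadd hq₀
  have hmOK : ∀ n b, mOK μ r n b := fun n b => (hval n b).legal (hνμ _) ENNReal.toReal_nonneg
  have hIOK : ∀ n, IOK μ s r n
    | 0 => ⟨hmOK 0 false, hmOK 0 true, by rw [← Rat.cast_add, massStrategy_sum hr 0]; exact hsq₀⟩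
    | n + 1 => ⟨hmOK (n + 1) false, hmOK (n + 1) true,
        (massStrategy_sum hr (n + 1)).trans (lastSel_hist_succ q₀ r n)⟩
  rintro (⟨n, -, hn⟩ | ⟨hII, hA⟩)
  · exact hn (hIOK n)
  · refine hC (bits r) (fun n => ?_) hA
    have hpos := (hval n (bits r n)).pos_of_ne_zero (hII n).2
    rwa [← path_succ] at hpos

theorem winsI_of_isClosed {μ : Measure Cantor} [IsFiniteMeasure μ] {s : ℝ} {C F : Set Cantor}
    (hF : IsClosed F) (hFC : Disjoint F C) (hs : s < (μ F).toReal) : WinsI μ s C := by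
  refine winsI_of_mass (fun t => (μ (cyl t ∩ F)).toReal)
    (fun t => ENNReal.toReal_mono (measure_ne_top μ _) (measure_mono Set.inter_subset_left))
    (fun t => by rw [measure_cyl_inter_eq_add, ENNReal.toReal_add (measure_ne_top μ _)
      (measure_ne_top μ _)]) (by simpa [cyl_nil] using hs) fun x hx => ?_
  refine hFC.notMem_of_mem_left (by_contra fun hxF => ?_)
  obtain ⟨n, hn⟩ := PiNat.exists_disjoint_cylinder hF hxF
  have hnull : μ (cyl ((List.range (n + 1)).map x) ∩ F) = 0 := by
    rw [cyl_range_map, Set.inter_comm,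
      Set.disjoint_iff_inter_eq_empty.1 (hn.mono_right (PiNat.cylinder_anti x n.le_succ)),
      measure_empty]
  simpa [hnull] using hx n

def pre2 (p : Cantor × Cantor) (n : ℕ) : List (Bool × Bool) :=
  (List.range n).map fun i => (p.1 i, p.2 i)

lemma pre2_succ (p : Cantor × Cantor) (n : ℕ) :
    pre2 p (n + 1) = pre2 p n ++ [(p.1 n, p.2 n)] := by
  simp [pre2, List.range_succ]

lemma mem_rect_iff {u : List (Bool × Bool)} {p : Cantor × Cantor} :
    p ∈ rect u ↔ pre2 p u.length = u := by
  simp only [rect, Set.mem_prod, mem_cyl_iff, List.length_map, pre2, List.ext_getElem_iff,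
    List.length_range, List.getElem_map, List.getElem_range, true_and,
    Prod.ext_iff]
  exact ⟨fun h i hi _ => ⟨h.1 i hi hi, h.2 i hi hi⟩,
    fun h => ⟨fun i hi _ => (h i hi hi).1, fun i hi _ => (h i hi hi).2⟩⟩

lemma rect_nonempty (u : List (Bool × Bool)) : (rect u).Nonempty :=
  (cyl_nonempty _).prod (cyl_nonempty _)

lemma mem_rect_append {u : List (Bool × Bool)} {b : Bool × Bool} {p : Cantor × Cantor} :
    p ∈ rect (u ++ [b]) ↔ p ∈ rect u ∧ (p.1 u.length, p.2 u.length) = b := by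
  simp only [mem_rect_iff, List.length_append, List.length_singleton, pre2_succ]
  exact ⟨fun h => List.append_inj' h rfl |>.imp_right List.singleton_inj.1,
    fun ⟨h1, h2⟩ => by rw [h1, h2]⟩

lemma isOpen_rect (u : List (Bool × Bool)) : IsOpen (rect u) :=
  (isOpen_cyl _).prod (isOpen_cyl _)

lemma measure_rect_inter_eq_sum (ρ : Measure (Cantor × Cantor)) (u : List (Bool × Bool))
    (V : Set (Cantor × Cantor)) : ρ (rect u ∩ V) = ∑ b, ρ (rect (u ++ [b]) ∩ V) := by
  have hg : Measurable fun p : Cantor × Cantor => (p.1 u.length, p.2 u.length) :=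
    ((measurable_pi_apply _).comp measurable_fst).prodMk
      ((measurable_pi_apply _).comp measurable_snd)
  rw [measure_eq_sum_inter_preimage ρ hg]
  refine Finset.sum_congr rfl fun b _ => congrArg ρ ?_
  ext p
  simp only [Set.mem_inter_iff, Set.mem_preimage, Set.mem_singleton_iff, mem_rect_append]
  tauto

lemma isLocallyConstant_pre2 (n : ℕ) : IsLocallyConstant fun p => pre2 p n := by
  refine IsLocallyConstant.iff_isOpen_fiber.2 fun u => ?_
  by_cases hu : u.length = n
  · convert isOpen_rect u using 1
    ext p
    rw [mem_rect_iff, hu]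
    rfl
  · convert isOpen_empty
    ext p
    simp only [Set.mem_preimage, Set.mem_singleton_iff, Set.mem_empty_iff_false, iff_false]
    rintro rfl
    simp [pre2] at hu

def posBranches (W : List (Bool × Bool) → ℝ) : Set (Cantor × Cantor) :=
  ⋂ n, (fun p => pre2 p n) ⁻¹' {v | 0 < W v}

lemma isClosed_posBranches (W : List (Bool × Bool) → ℝ) : IsClosed (posBranches W) :=
  isClosed_iInter fun n => by
    simpa using ((isLocallyConstant_pre2 n) {v | 0 < W v}ᶜ).isClosed_compl

section MassDistribution

variable {W : List (Bool × Bool) → ℝ} (hW0 : ∀ u, 0 ≤ W u)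
  (hWadd : ∀ u, W u = ∑ b, W (u ++ [b]))
include hW0 hWadd

lemma pos_of_pos_append {u : List (Bool × Bool)} {b : Bool × Bool} (h : 0 < W (u ++ [b])) :
    0 < W u := by
  rw [hWadd u]
  exact h.trans_le (Finset.single_le_sum (fun c _ => hW0 (u ++ [c])) (Finset.mem_univ b))

variable {ρ : Measure (Cantor × Cantor)} (hWρ : ∀ u, W u ≤ (ρ (rect u)).toReal)
include hWρ

lemma ofReal_le_measure_rect_inter (k : ℕ) (u : List (Bool × Bool)) :
    ENNReal.ofReal (W u) ≤ ρ (rect u ∩ (fun p => pre2 p (u.length + k)) ⁻¹' {v | 0 < W v}) := by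
  induction k generalizing u with
  | zero =>
    rcases le_or_gt (W u) 0 with hu | hu
    · simp [ENNReal.ofReal_of_nonpos hu]
    · have hfull : rect u ∩ (fun p => pre2 p u.length) ⁻¹' {v | 0 < W v} = rect u := by
        refine Set.inter_eq_left.2 fun p hp => ?_
        simpa [mem_rect_iff.1 hp] using hu
      rw [add_zero, hfull]
      exact ENNReal.ofReal_le_of_le_toReal (hWρ u)
  | succ k ih =>
    calc ENNReal.ofReal (W u) = ∑ b, ENNReal.ofReal (W (u ++ [b])) := by
          rw [hWadd u, ENNReal.ofReal_sum_of_nonneg fun b _ => hW0 _]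
      _ ≤ ∑ b, ρ (rect (u ++ [b]) ∩ (fun p => pre2 p (u.length + (k + 1))) ⁻¹' {v | 0 < W v}) :=
          Finset.sum_le_sum fun b _ => by
            have h := ih (u ++ [b])
            rwa [List.length_append, List.length_singleton, add_assoc, add_comm 1 k] at h
      _ = _ := (measure_rect_inter_eq_sum ρ u _).symm

theorem ofReal_le_measure_posBranches [IsFiniteMeasure ρ] : ENNReal.ofReal (W []) ≤ ρ (posBranches W) := by
  have hanti : Antitone fun n => (fun p => pre2 p n) ⁻¹' {v | 0 < W v} :=
    antitone_nat_of_succ_le fun n p hp => by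
      simp only [Set.mem_preimage, Set.mem_ofPred_eq, pre2_succ] at hp ⊢
      exact pos_of_pos_append hW0 hWadd hp
  rw [posBranches, hanti.measure_iInter (fun n => ?_) ⟨0, measure_ne_top ρ _⟩]
  · refine le_iInf fun n => ?_
    simpa [rect, cyl_nil] using ofReal_le_measure_rect_inter hW0 hWadd hWρ n []
  · exact (((isLocallyConstant_pre2 n) {v | 0 < W v}ᶜ).isClosed_compl.measurableSet.congr
      (by simp)).nullMeasurableSet

end MassDistribution

def histOf (σ : StratI2) (u : List (Bool × Bool)) : List GRound2 :=
  u.foldl (fun h b => h ++ [(σ h, b)]) []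

lemma histOf_append (σ : StratI2) (u : List (Bool × Bool)) (b : Bool × Bool) :
    histOf σ (u ++ [b]) = histOf σ u ++ [(σ (histOf σ u), b)] := by
  simp [histOf]

def IILegal (σ : StratI2) (u : List (Bool × Bool)) : Prop := ∀ x ∈ histOf σ u, x.1 x.2 ≠ 0

lemma IILegal_append {σ : StratI2} {u : List (Bool × Bool)} {b : Bool × Bool} :
    IILegal σ (u ++ [b]) ↔ IILegal σ u ∧ σ (histOf σ u) b ≠ 0 := by
  simp only [IILegal, histOf_append, List.forall_mem_append, List.forall_mem_singleton]

def runOf (σ : StratI2) (p : Cantor × Cantor) : Run2 :=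
  fun n => (σ (histOf σ (pre2 p n)), (p.1 n, p.2 n))

lemma hist2_runOf (σ : StratI2) (p : Cantor × Cantor) (n : ℕ) :
    hist2 (runOf σ p) n = histOf σ (pre2 p n) := by
  induction n with
  | zero => rfl
  | succ n ih =>
    rw [hist2, List.range_succ, List.map_append, ← hist2, ih, pre2_succ, histOf_append]
    rfl

lemma consI2_runOf (σ : StratI2) (p : Cantor × Cantor) : ConsI2 σ (runOf σ p) := fun n => by
  rw [hist2_runOf]
  rfl

lemma forall_lt_IIOK2_iff (r : Run2) (n : ℕ) :
    (∀ m < n, IIOK2 r m) ↔ ∀ x ∈ hist2 r n, x.1 x.2 ≠ 0 := by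
  simp [hist2, IIOK2, sel2, valI2, bits2]

open Classical in
/-- Beyond an illegal move of player II the rules no longer constrain player I, hence the
cutoff. -/
noncomputable def strategyMass (σ : StratI2) (u : List (Bool × Bool)) : ℝ :=
  if IILegal σ u then ∑ b, (σ (histOf σ u) b : ℝ) else 0

section WinningStrategy

variable {μ : Measure Cantor} {s : ℝ} {A : Set (Cantor × Cantor)} {σ : StratI2}
  (hσ : ∀ r : Run2, ConsI2 σ r → ¬ IIWinsRun2 μ s A r)
include hσ

lemma IOK2_of_forall_lt_IIOK2 {r : Run2} (hr : ConsI2 σ r) (n : ℕ)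
    (hII : ∀ m < n, IIOK2 r m) : IOK2 μ s r n := by
  induction n using Nat.strong_induction_on with
  | _ n ih =>
    by_contra hn
    exact hσ r hr <| Or.inl ⟨n, fun m hm => ⟨ih m hm fun k hk => hII k (hk.trans hm), hII m hm⟩, hn⟩

lemma IOK2_runOf_of_IILegal {u : List (Bool × Bool)} (hu : IILegal σ u) {p : Cantor × Cantor}
    (hp : p ∈ rect u) : IOK2 μ s (runOf σ p) u.length := by
  refine IOK2_of_forall_lt_IIOK2 hσ (consI2_runOf σ p) _ ?_
  rwa [forall_lt_IIOK2_iff, hist2_runOf, mem_rect_iff.1 hp]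

lemma value_legal {u : List (Bool × Bool)} (hu : IILegal σ u) (b : Bool × Bool) :
    0 ≤ σ (histOf σ u) b ∧ (σ (histOf σ u) b : ℝ) ≤ ((μ.prod μ) (rect (u ++ [b]))).toReal := by
  obtain ⟨p, hp⟩ := rect_nonempty u
  have hIOK := IOK2_runOf_of_IILegal hσ hu hp
  have hmOK : mOK2 μ (runOf σ p) u.length b := by
    cases h : u.length <;> rw [h] at hIOK <;> exact hIOK.1 b
  have hval : valI2 (runOf σ p) u.length b = σ (histOf σ u) b := by
    change σ (histOf σ (pre2 p u.length)) b = _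
    rw [mem_rect_iff.1 hp]
  have hpath : path2 (runOf σ p) u.length = u := mem_rect_iff.1 hp
  obtain ⟨h0, hle, -⟩ := hmOK
  rw [hval] at h0
  rw [hval, hpath] at hle
  exact ⟨h0, hle⟩

lemma lt_sum_value_nil : s < ∑ b, (σ [] b : ℝ) :=
  (IOK2_runOf_of_IILegal hσ (u := []) (by simp [IILegal, histOf]) (rect_nonempty []).some_mem).2

lemma sum_value_append {u : List (Bool × Bool)} {b : Bool × Bool} (hu : IILegal σ (u ++ [b])) :
    ∑ c, σ (histOf σ (u ++ [b])) c = σ (histOf σ u) b := by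
  obtain ⟨p, hp⟩ := rect_nonempty (u ++ [b])
  have hIOK := IOK2_runOf_of_IILegal hσ hu hp
  rw [List.length_append, List.length_singleton] at hIOK
  have hpre := mem_rect_iff.1 hp
  rw [List.length_append, List.length_singleton, pre2_succ] at hpre
  obtain ⟨hu', hb⟩ := List.append_inj' hpre rfl
  simpa [runOf, sel2, valI2, bits2, pre2_succ, hu', List.singleton_inj.1 hb] using hIOK.2

lemma strategyMass_nonneg (u : List (Bool × Bool)) : 0 ≤ strategyMass σ u := by
  unfold strategyMass
  split_ifs with hu
  · exact Finset.sum_nonneg fun b _ => Rat.cast_nonneg.2 (value_legal hσ hu b).1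
  · exact le_rfl

lemma strategyMass_le [IsFiniteMeasure μ] (u : List (Bool × Bool)) :
    strategyMass σ u ≤ ((μ.prod μ) (rect u)).toReal := by
  unfold strategyMass
  split_ifs with hu
  · rw [← Set.inter_univ (rect u), measure_rect_inter_eq_sum,
      ENNReal.toReal_sum fun b _ => measure_ne_top _ _]
    simpa using Finset.sum_le_sum fun b _ => (value_legal hσ hu b).2
  · exact ENNReal.toReal_nonneg

lemma strategyMass_eq_sum (u : List (Bool × Bool)) :
    strategyMass σ u = ∑ b, strategyMass σ (u ++ [b]) := by
  by_cases hu : IILegal σ u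
  · rw [strategyMass, if_pos hu]
    refine Finset.sum_congr rfl fun b _ => ?_
    by_cases hb : σ (histOf σ u) b = 0
    · rw [strategyMass, if_neg fun h => (IILegal_append.1 h).2 hb, hb, Rat.cast_zero]
    · have hub := IILegal_append.2 ⟨hu, hb⟩
      rw [strategyMass, if_pos hub, ← Rat.cast_sum, sum_value_append hσ hub]
  · simp [strategyMass, hu, IILegal_append]

lemma disjoint_posBranches_strategyMass : Disjoint (posBranches (strategyMass σ)) A := by
  refine Set.disjoint_left.2 fun p hp hpA => hσ (runOf σ p) (consI2_runOf σ p) (Or.inr ?_)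
  have hII : ∀ n, IIOK2 (runOf σ p) n := fun n => by
    have hlegal : IILegal σ (pre2 p (n + 1)) := by
      by_contra h
      simpa [strategyMass, h] using Set.mem_iInter.1 hp (n + 1)
    rw [IILegal, ← hist2_runOf, ← forall_lt_IIOK2_iff] at hlegal
    exact hlegal n n.lt_succ_self
  exact ⟨fun n => ⟨IOK2_of_forall_lt_IIOK2 hσ (consI2_runOf σ p) n fun m _ => hII m, hII n⟩, hpA⟩

end WinningStrategy

theorem exists_isClosed_disjoint_of_winsI2 {μ : Measure Cantor} [IsFiniteMeasure μ] {s : ℝ}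
    {A : Set (Cantor × Cantor)} (h : WinsI2 μ s A) :
    ∃ F, IsClosed F ∧ Disjoint F A ∧ s < ((μ.prod μ) F).toReal := by
  obtain ⟨σ, hσ⟩ := h
  refine ⟨_, isClosed_posBranches _, disjoint_posBranches_strategyMass hσ, ?_⟩
  have hnil : s < strategyMass σ [] := by
    simpa [strategyMass, IILegal, histOf] using lt_sum_value_nil hσ
  refine hnil.trans_le ?_
  rw [← ENNReal.toReal_ofReal (strategyMass_nonneg hσ [])]
  exact ENNReal.toReal_mono (measure_ne_top _ _) (ofReal_le_measure_posBranches
    (strategyMass_nonneg hσ) (strategyMass_eq_sum hσ) (strategyMass_le hσ))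

lemma exists_isCompact_forall_measure_preimage_pos {α β : Type*} [TopologicalSpace α]
    [MeasurableSpace α] [MeasurableSpace β] {μ : Measure α} [μ.InnerRegular] {ν : Measure β}
    [SFinite ν] {F : Set (α × β)} (hF : MeasurableSet F) (hpos : 0 < μ.prod ν F) :
    ∃ K, IsCompact K ∧ 0 < μ K ∧ ∀ x ∈ K, 0 < ν (Prod.mk x ⁻¹' F) := by
  have hG : MeasurableSet {x | 0 < ν (Prod.mk x ⁻¹' F)} :=
    measurable_measure_prodMk_left hF measurableSet_Ioi
  have hμG : 0 < μ {x | 0 < ν (Prod.mk x ⁻¹' F)} := by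
    rw [pos_iff_ne_zero, Ne, Measure.measure_prod_null hF, Filter.EventuallyEq, ae_iff] at hpos
    simpa [pos_iff_ne_zero] using hpos
  obtain ⟨K, hKG, hK, hμK⟩ := hG.exists_lt_isCompact hμG
  exact ⟨K, hK, hμK, hKG⟩

/-- If player I wins the two-dimensional game `G₂(0, A)`, then player I wins `G(0, B)`,
where `B` is the set of `x` such that player I does not win `G(0, A_x)`. -/
theorem winsI_sections_of_winsI2 (μ : Measure Cantor) [IsProbabilityMeasure μ]
    (A : Set (Cantor × Cantor)) (h : WinsI2 μ 0 A) :
    WinsI μ 0 {x : Cantor | ¬ WinsI μ 0 {y : Cantor | (x, y) ∈ A}} := by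
  obtain ⟨F, hF, hFA, hμF⟩ := exists_isClosed_disjoint_of_winsI2 h
  obtain ⟨K, hK, hμK, hsec⟩ := exists_isCompact_forall_measure_preimage_pos hF.measurableSet
    (ENNReal.toReal_pos_iff.1 hμF).1
  refine winsI_of_isClosed hK.isClosed (Set.disjoint_left.2 fun x hxK hxB => hxB ?_)
    (ENNReal.toReal_pos hμK.ne' (measure_ne_top μ K))
  exact winsI_of_isClosed (hF.preimage (Continuous.prodMk_right x)) (hFA.preimage _)
    (ENNReal.toReal_pos (hsec x hxK).ne' (measure_ne_top μ _))

end MeasureGame
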